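/- arXiv:1604.08878 — 5 statements merged into one kernel-verified Lean document; each statement's English description precedes it below -/
import Mathlib

section
/- Let L₀, …, L_{r−1} be finitely many context-free languages over an alphabet containing two distinct letters 1 and 0. Then there exist natural numbers Q ≥ 1 and P such that for every p ≥ P, every k ∈ ℕ, and every j < r: if the word 1·0^{p} belongs to L_j, then the word 1·0^{p+kQ} also belongs to L_j. -/
/-!
Let the right-hand sides of a grammar have length at most `M`. In a parse tree of a long word
follow a heavy path: from each node go to a subtree whose yield is at least a `1/M` share of the
node's yield. Along the strict shrinkings of this path the yields drop by a factor of at most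
`M`, so near the bottom there are `2K + 1` consecutive such nodes, where `K` bounds the number of
nonterminals, all with yield of length at most `M ^ (2K + 1)`. Two of them carry the same
nonterminal and agree on whether their yield contains the letter `1`; since `1·0^p` contains a
single `1`, the two pumped pieces `v`, `y` between them consist of `0`s only, so `1·0^p` pumps to
`1·0^(p + k e)` with `e = |vy| ≤ M ^ (2K + 1)`. Hence `Q = N!` works, where `N` bounds these
`e` over the finitely many grammars.
-/

open List

namespace ContextFreeGrammar

variable {T : Type*} {g : ContextFreeGrammar T}

/-- `g.Yields d l w`: the sentential form `l` derives the word `w` through parse trees of height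
at most `d`. -/
inductive Yields (g : ContextFreeGrammar T) : ℕ → List (Symbol T g.NT) → List T → Prop
  | nil (d : ℕ) : g.Yields d [] []
  | terminal (d : ℕ) (t : T) {l w} : g.Yields d l w → g.Yields d (.terminal t :: l) (t :: w)
  | nonterminal (d : ℕ) {r : ContextFreeRule T g.NT} {l w₁ w₂} (hr : r ∈ g.rules) :
      g.Yields d r.output w₁ → g.Yields (d + 1) l w₂ →
      g.Yields (d + 1) (.nonterminal r.input :: l) (w₁ ++ w₂)

namespace Yields

variable {d : ℕ} {l l₁ l₂ : List (Symbol T g.NT)} {w w₁ w₂ : List T}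

lemma mono (h : g.Yields d l w) {e : ℕ} (hde : d ≤ e) : g.Yields e l w := by
  induction h generalizing e with
  | nil => exact nil e
  | terminal d t _ ih => exact terminal e t (ih hde)
  | nonterminal d hr _ _ ih₁ ih₂ =>
    obtain ⟨e, rfl⟩ := Nat.exists_eq_add_of_le' (Nat.lt_of_lt_of_le (Nat.succ_pos d) hde)
    exact nonterminal e hr (ih₁ (by omega)) (ih₂ hde)

lemma append (h₁ : g.Yields d l₁ w₁) (h₂ : g.Yields d l₂ w₂) :
    g.Yields d (l₁ ++ l₂) (w₁ ++ w₂) := by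
  induction h₁ with
  | nil => simpa
  | terminal d t _ ih => exact terminal d t (ih h₂)
  | nonterminal d hr h _ _ ih => simpa using nonterminal d hr h (ih h₂)

lemma of_append {l₁ : List (Symbol T g.NT)} (h : g.Yields d (l₁ ++ l₂) w) :
    ∃ w₁ w₂, w = w₁ ++ w₂ ∧ g.Yields d l₁ w₁ ∧ g.Yields d l₂ w₂ := by
  induction l₁ generalizing d w with
  | nil => exact ⟨[], w, rfl, nil d, h⟩
  | cons s l₁ ih =>
    cases h with
    | terminal d t h =>
      obtain ⟨w₁, w₂, rfl, h₁, h₂⟩ := ih h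
      exact ⟨t :: w₁, w₂, rfl, terminal d t h₁, h₂⟩
    | nonterminal d hr hr' h =>
      obtain ⟨w₁, w₂, rfl, h₁, h₂⟩ := ih h
      exact ⟨_ ++ w₁, w₂, by simp, nonterminal d hr hr' h₁, h₂⟩

lemma eq_nil (h : g.Yields d [] w) : w = [] := by
  cases h; rfl

lemma eq_singleton (h : g.Yields d [.terminal t] w) : w = [t] := by
  cases h with | terminal _ _ h => rw [h.eq_nil]

lemma exists_rule (h : g.Yields d [.nonterminal A] w) :
    ∃ d₀ r, d = d₀ + 1 ∧ r ∈ g.rules ∧ r.input = A ∧ g.Yields d₀ r.output w := by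
  cases h with | nonterminal d₀ hr h₁ h₂ => exact ⟨d₀, _, rfl, hr, rfl, by simpa [h₂.eq_nil]⟩

lemma derives (h : g.Yields d l w) : g.Derives l (w.map .terminal) := by
  induction h with
  | nil => rfl
  | terminal d t _ ih => simpa using ih.append_left [.terminal t]
  | nonterminal d hr _ _ ih₁ ih₂ =>
    refine Produces.trans_derives ⟨_, hr, ContextFreeRule.Rewrites.head _⟩ ?_
    simpa using (ih₁.append_right _).trans (ih₂.append_left _)

lemma map_terminal (w : List T) : g.Yields 0 (w.map .terminal) w := by
  induction w with
  | nil => exact nil 0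
  | cons t w ih => exact terminal 0 t ih

lemma exists_heavy_tree : ∀ {l : List (Symbol T g.NT)} {w : List T}, g.Yields d l w → l ≠ [] →
    ∃ l₁ s l₂ w₁ v w₂, l = l₁ ++ s :: l₂ ∧ w = w₁ ++ v ++ w₂ ∧ g.Yields d l₁ w₁ ∧
      g.Yields d [s] v ∧ g.Yields d l₂ w₂ ∧ w.length ≤ l.length * v.length
  | [], _, _, hl => absurd rfl hl
  | s :: l, w, h, _ => by
    obtain ⟨v, w', rfl, hs, h'⟩ := of_append (l₁ := [s]) h
    rcases eq_or_ne l [] with rfl | hl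
    · exact ⟨[], s, [], [], v, [], rfl, by simp [h'.eq_nil], nil d, hs, nil d, by simp [h'.eq_nil]⟩
    obtain ⟨l₁, s', l₂, w₁, v', w₂, rfl, rfl, h₁, hs', h₂, hle⟩ := exists_heavy_tree h' hl
    simp only [length_append, length_cons] at hle
    rcases le_total v'.length v.length with hv | hv
    · exact ⟨[], s, l₁ ++ s' :: l₂, [], v, w₁ ++ v' ++ w₂, rfl, by simp, nil d, hs, h', by
        simp only [length_append, length_cons]; nlinarith⟩
    · exact ⟨s :: l₁, s', l₂, v ++ w₁, v', w₂, rfl, by simp, hs.append h₁, hs', h₂, by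
        simp only [length_append, length_cons]; nlinarith⟩

end Yields

lemma Derives.exists_yields {l : List (Symbol T g.NT)} {w : List T}
    (h : g.Derives l (w.map .terminal)) : ∃ d, g.Yields d l w := by
  induction h using Relation.ReflTransGen.head_induction_on with
  | refl => exact ⟨0, .map_terminal w⟩
  | head hp _ ih =>
    obtain ⟨d, hd⟩ := ih
    obtain ⟨r, hr, hrw⟩ := hp
    obtain ⟨p, q, rfl, rfl⟩ := hrw.exists_parts
    obtain ⟨wp, w', rfl, hp, h'⟩ := Yields.of_append (by simpa using hd)
    obtain ⟨v, wq, rfl, hv, hq⟩ := Yields.of_append h'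
    have := (hp.mono d.le_succ).append (.nonterminal d hr hv (hq.mono d.le_succ))
    exact ⟨d + 1, by simpa using this⟩

lemma Derives.append {l₁ l₂ l₁' l₂' : List (Symbol T g.NT)} (h₁ : g.Derives l₁ l₁')
    (h₂ : g.Derives l₂ l₂') : g.Derives (l₁ ++ l₂) (l₁' ++ l₂') :=
  (h₁.append_right l₂).trans (h₂.append_left l₁')

lemma exists_input_eq_of_derives {A : g.NT} {w : List T}
    (h : g.Derives [.nonterminal A] (w.map .terminal)) : ∃ r ∈ g.rules, r.input = A := by
  by_contra! hA
  refine derives_nonterminal hA _ ?_ h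
  cases w <;> simp

/-- `(B, x)` sits inside `(A, w)` as in a parse tree: `A ⇒* u B y` with `w = u x y`. -/
def Encloses (g : ContextFreeGrammar T) (a b : g.NT × List T) : Prop :=
  ∃ u y : List T,
    g.Derives [.nonterminal a.1] (u.map .terminal ++ .nonterminal b.1 :: y.map .terminal) ∧
      a.2 = u ++ b.2 ++ y

namespace Encloses

variable {a b c : g.NT × List T}

lemma refl (a : g.NT × List T) : g.Encloses a a :=
  ⟨[], [], by simp [Derives.refl], by simp⟩

lemma trans (hab : g.Encloses a b) (hbc : g.Encloses b c) : g.Encloses a c := by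
  obtain ⟨u₁, y₁, h₁, ha⟩ := hab
  obtain ⟨u₂, y₂, h₂, hb⟩ := hbc
  refine ⟨u₁ ++ u₂, y₂ ++ y₁, h₁.trans ?_, by simp [ha, hb]⟩
  simpa using (Derives.refl (u₁.map Symbol.terminal)).append (h₂.append_right _)

lemma length_le (h : g.Encloses a b) : b.2.length ≤ a.2.length := by
  obtain ⟨u, y, -, h⟩ := h
  rw [h, length_append, length_append]
  omega

lemma derives (hab : g.Encloses a b) (hb : g.Derives [.nonterminal b.1] (b.2.map .terminal)) :
    g.Derives [.nonterminal a.1] (a.2.map .terminal) := by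
  obtain ⟨u, y, h, ha⟩ := hab
  refine h.trans ?_
  simpa [ha] using (Derives.refl (u.map Symbol.terminal)).append (hb.append_right _)

lemma iterate {B : g.NT} {u y : List T}
    (h : g.Derives [.nonterminal B] (u.map .terminal ++ .nonterminal B :: y.map .terminal))
    (x : List T) (k : ℕ) :
    g.Encloses (B, (replicate k u).flatten ++ x ++ (replicate k y).flatten) (B, x) := by
  induction k with
  | zero => simpa using refl (B, x)
  | succ k ih =>
    refine .trans ⟨u, y, h, ?_⟩ ih
    have hy : (replicate (k + 1) y).flatten = (replicate k y).flatten ++ y := by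
      simp [replicate_succ']
    rw [hy, replicate_succ, flatten_cons]
    simp

end Encloses

section HeavyPath

variable {M : ℕ} (hM : ∀ r ∈ g.rules, r.output.length ≤ M)
include hM

lemma Yields.exists_heavy_step {d : ℕ} : ∀ {A : g.NT} {w : List T},
    g.Yields d [.nonterminal A] w → M < w.length →
    ∃ b, g.Encloses (A, w) b ∧ g.Derives [.nonterminal b.1] (b.2.map .terminal) ∧
      b.2.length < w.length ∧ w.length ≤ M * b.2.length := by
  induction d with
  | zero => intro A w h; cases h
  | succ d ih =>
    intro A w h hw
    obtain ⟨_, r, hd, hr, rfl, h⟩ := h.exists_rule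
    cases Nat.succ_injective hd
    have hout : r.output ≠ [] := by
      rintro hout
      rw [hout] at h
      rw [h.eq_nil] at hw
      simp at hw
    obtain ⟨l₁, s, l₂, w₁, v, w₂, hout, rfl, h₁, hs, h₂, hle⟩ := h.exists_heavy_tree hout
    have hvM : (w₁ ++ v ++ w₂).length ≤ M * v.length :=
      hle.trans (Nat.mul_le_mul_right _ (hM r hr))
    have hv : 1 < v.length := by
      by_contra! hv
      have := Nat.mul_le_mul_left M hv
      omega
    have hvw : v.length ≤ (w₁ ++ v ++ w₂).length := by simp; omega
    obtain ⟨B, rfl⟩ : ∃ B, s = .nonterminal B := by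
      cases s with
      | terminal t => simp [hs.eq_singleton] at hv
      | nonterminal B => exact ⟨B, rfl⟩
    have hAB : g.Encloses (r.input, w₁ ++ v ++ w₂) (B, v) := by
      refine ⟨w₁, w₂, ?_, rfl⟩
      refine Produces.trans_derives ⟨r, hr, hout ▸ ContextFreeRule.Rewrites.input_output⟩ ?_
      exact h₁.derives.append (h₂.derives.append_left [.nonterminal B])
    rcases Nat.lt_or_ge v.length (w₁ ++ v ++ w₂).length with hlt | hge
    · exact ⟨(B, v), hAB, by simpa using hs.derives, hlt, hvM⟩
    · -- the heavy subtree has the whole yield: descend into it, at smaller height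
      obtain ⟨b, hBb, hb, hlt, hle⟩ := ih hs (by omega)
      exact ⟨b, hAB.trans hBb, hb, by omega, by omega⟩

lemma exists_heavy_step {a : g.NT × List T} (ha : g.Derives [.nonterminal a.1] (a.2.map .terminal))
    (hlen : M < a.2.length) :
    ∃ b, g.Encloses a b ∧ g.Derives [.nonterminal b.1] (b.2.map .terminal) ∧
      b.2.length < a.2.length ∧ a.2.length ≤ M * b.2.length :=
  have ⟨_, h⟩ := ha.exists_yields
  h.exists_heavy_step hM hlen

lemma exists_encloses_length_mem_Ioc {N : ℕ} (hN : 0 < N) {a : g.NT × List T}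
    (ha : g.Derives [.nonterminal a.1] (a.2.map .terminal)) (hlen : N < a.2.length) :
    ∃ b, g.Encloses a b ∧ g.Derives [.nonterminal b.1] (b.2.map .terminal) ∧
      N < b.2.length ∧ b.2.length ≤ M * N := by
  induction hn : a.2.length using Nat.strong_induction_on generalizing a with
  | _ n ih =>
  subst hn
  by_cases hle : a.2.length ≤ M * N
  · exact ⟨a, .refl a, ha, hlen, hle⟩
  obtain ⟨b, hab, hb, hlt, hba⟩ := exists_heavy_step hM ha (by nlinarith)
  obtain ⟨c, hbc, hc, hNc, hcM⟩ := ih _ hlt hb (by nlinarith) rfl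
  exact ⟨c, hab.trans hbc, hc, hNc, hcM⟩

lemma exists_heavy_path (m : ℕ) {a : g.NT × List T}
    (ha : g.Derives [.nonterminal a.1] (a.2.map .terminal)) (hlen : M ^ m < a.2.length) :
    ∃ x : ℕ → g.NT × List T, x 0 = a ∧
      (∀ i ≤ m, g.Derives [.nonterminal (x i).1] ((x i).2.map .terminal)) ∧
      ∀ i < m, g.Encloses (x i) (x (i + 1)) ∧ (x (i + 1)).2.length < (x i).2.length := by
  induction m generalizing a with
  | zero => exact ⟨fun _ => a, rfl, by simpa using ha, by simp⟩
  | succ m ih =>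
    obtain ⟨b, hab, hb, hlt, hba⟩ :=
      exists_heavy_step hM ha ((Nat.le_self_pow m.succ_ne_zero M).trans_lt hlen)
    obtain ⟨x, rfl, hx, hxx⟩ := ih hb (by rw [pow_succ] at hlen; nlinarith)
    refine ⟨fun | 0 => a | i + 1 => x i, rfl, fun | 0, _ => ha | i + 1, hi => hx i (by omega),
      fun | 0, _ => ⟨hab, hlt⟩ | i + 1, hi => hxx i (by omega)⟩

end HeavyPath

lemma Encloses.of_forall_succ {x : ℕ → g.NT × List T} {m : ℕ}
    (hx : ∀ i < m, g.Encloses (x i) (x (i + 1)) ∧ (x (i + 1)).2.length < (x i).2.length)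
    {i j : ℕ} (hij : i < j) (hjm : j ≤ m) :
    g.Encloses (x i) (x j) ∧ (x j).2.length < (x i).2.length := by
  induction j, hij using Nat.le_induction with
  | base => exact hx i (by omega)
  | succ j hij ih =>
    obtain ⟨h₁, h₂⟩ := ih (by omega)
    obtain ⟨h₃, h₄⟩ := hx j (by omega)
    exact ⟨h₁.trans h₃, h₄.trans h₂⟩

theorem exists_encloses_same_nonterminal {M : ℕ}
    (hM : ∀ r ∈ g.rules, r.output.length ≤ M) (hM₀ : 0 < M)
    {β : Type*} [Fintype β] (χ : List T → β) {A : g.NT} {w : List T}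
    (hw : g.Derives [.nonterminal A] (w.map .terminal))
    (hlen : M ^ (g.rules.card * Fintype.card β) < w.length) :
    ∃ a b, g.Encloses (A, w) a ∧ g.Encloses a b ∧
      g.Derives [.nonterminal b.1] (b.2.map .terminal) ∧ a.1 = b.1 ∧ χ a.2 = χ b.2 ∧
      b.2.length < a.2.length ∧ a.2.length ≤ M ^ (g.rules.card * Fintype.card β + 1) := by
  classical
  set m := g.rules.card * Fintype.card β
  obtain ⟨t, hwt, ht, hmt, htm⟩ :=
    exists_encloses_length_mem_Ioc hM (pow_pos hM₀ m) (a := (A, w)) hw hlen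
  obtain ⟨x, rfl, hxd, hx⟩ := exists_heavy_path hM m ht hmt
  have hcard : (g.rules.image ContextFreeRule.input ×ˢ (Finset.univ : Finset β)).card <
      (Finset.range (m + 1)).card := by
    rw [Finset.card_product, Finset.card_univ, Finset.card_range]
    exact Nat.lt_succ_of_le (Nat.mul_le_mul_right _ Finset.card_image_le)
  obtain ⟨i, hi, j, hj, hne, hij⟩ := Finset.exists_ne_map_eq_of_card_lt_of_maps_to hcard
    (f := fun i => ((x i).1, χ (x i).2)) fun i hi => by
      have := hxd i (by simpa [Nat.lt_succ_iff] using hi)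
      simpa using exists_input_eq_of_derives this
  wlog hlt : i < j generalizing i j
  · exact this j hj i hi hne.symm hij.symm (by omega)
  simp only [Finset.mem_range, Prod.mk.injEq] at hj hij
  obtain ⟨hxij, hlen⟩ := Encloses.of_forall_succ hx hlt (by omega)
  have h₀ : g.Encloses (x 0) (x i) := by
    rcases i.eq_zero_or_pos with rfl | hi₀
    · exact .refl _
    · exact (Encloses.of_forall_succ hx hi₀ (by omega)).1
  refine ⟨x i, x j, hwt.trans h₀, hxij, hxd j (by omega), hij.1, hij.2, hlen, ?_⟩
  rw [pow_succ']
  exact h₀.length_le.trans htm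

theorem pumping_lemma_avoiding [DecidableEq T] (g : ContextFreeGrammar T) :
    ∃ n, ∀ w ∈ g.language, n ≤ w.length → ∀ c : T, w.count c ≤ 1 →
      ∃ u v x y z, w = u ++ v ++ x ++ y ++ z ∧ c ∉ v ∧ c ∉ y ∧
        0 < (v ++ y).length ∧ (v ++ y).length ≤ n ∧
        ∀ k, u ++ (replicate k v).flatten ++ x ++ (replicate k y).flatten ++ z ∈ g.language := by
  set M := (g.rules.sup fun r => r.output.length) + 2
  have hM : ∀ r ∈ g.rules, r.output.length ≤ M := fun r hr =>
    (Finset.le_sup (f := fun r => r.output.length) hr).trans (by omega)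
  refine ⟨M ^ (g.rules.card * Fintype.card Prop + 1), fun w hw hn c hc => ?_⟩
  obtain ⟨⟨B, _⟩, b, ⟨u, z, hS, rfl⟩, ⟨v, y, hB, hvby⟩, hb, rfl, hχ, hlt, hle⟩ :=
    exists_encloses_same_nonterminal hM (by omega) (c ∈ ·) hw
      ((Nat.pow_lt_pow_right (by omega) (Nat.lt_succ_self _)).trans_le hn)
  simp only at hS hB hvby hχ hlt hle
  subst hvby
  have hvy : c ∉ v ∧ c ∉ y := by
    by_cases hcb : c ∈ b.2
    · have := count_pos_iff.2 hcb
      simp only [count_append] at hc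
      exact ⟨fun h => by have := count_pos_iff.2 h; omega,
        fun h => by have := count_pos_iff.2 h; omega⟩
    · rw [← hχ] at hcb
      simp only [mem_append, not_or] at hcb
      exact ⟨hcb.1.1, hcb.2⟩
  refine ⟨u, v, b.2, y, z, by simp, hvy.1, hvy.2, by simp at hlt ⊢; omega,
    by simp at hle ⊢; omega, fun k => ?_⟩
  have hroot : g.Encloses
      (g.initial, u ++ ((replicate k v).flatten ++ b.2 ++ (replicate k y).flatten) ++ z)
      (b.1, (replicate k v).flatten ++ b.2 ++ (replicate k y).flatten) := ⟨u, z, hS, rfl⟩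
  simpa using (hroot.trans (Encloses.iterate hB b.2 k)).derives hb

end ContextFreeGrammar

namespace List

variable {T : Type*} {a b : T}

lemma append_replicate_append_eq_cons_replicate {s t : List T} {p q : ℕ}
    (h : s ++ t = a :: replicate p b) (hs : s ≠ [] ∨ q = 0) :
    s ++ replicate q b ++ t = a :: replicate (p + q) b := by
  rcases hs with hs | rfl
  · obtain ⟨c, s, rfl⟩ := exists_cons_of_ne_nil hs
    simp only [cons_append, cons.injEq, append_assoc] at h ⊢
    refine ⟨h.1, eq_replicate_iff.2 ⟨?_, fun x hx => ?_⟩⟩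
    · have := congrArg length h.2
      simp only [length_append, length_replicate] at this ⊢
      omega
    · simp only [mem_append, mem_replicate] at hx
      rcases hx with hx | hx | hx
      · exact eq_of_mem_replicate (h.2 ▸ mem_append_left _ hx)
      · exact hx.2
      · exact eq_of_mem_replicate (h.2 ▸ mem_append_right _ hx)
  · simpa using h

lemma pump_eq_cons_replicate {u v x y z : List T} {p : ℕ}
    (h : u ++ v ++ x ++ y ++ z = a :: replicate p b) (hv : a ∉ v) (hy : a ∉ y)
    (hvy : v ++ y ≠ []) (m : ℕ) :
    u ++ (replicate (m + 1) v).flatten ++ x ++ (replicate (m + 1) y).flatten ++ z =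
      a :: replicate (p + m * (v ++ y).length) b := by
  have hzeros : ∀ l : List T, a ∉ l → (∀ c ∈ l, c ∈ a :: replicate p b) → ∃ i, l = replicate i b :=
    fun l ha hl => ⟨l.length, eq_replicate_iff.2 ⟨rfl, fun c hc => by
      rcases mem_cons.1 (hl c hc) with rfl | hc'
      · exact absurd hc ha
      · exact eq_of_mem_replicate hc'⟩⟩
  obtain ⟨i, rfl⟩ := hzeros v hv fun c hc => h ▸ by simp [hc]
  obtain ⟨j, rfl⟩ := hzeros y hy fun c hc => h ▸ by simp [hc]
  have h₁ := append_replicate_append_eq_cons_replicate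
    (s := u ++ replicate i b ++ x ++ replicate j b) (q := m * j) h (Or.inl (by simp at hvy ⊢; tauto))
  have h₂ := append_replicate_append_eq_cons_replicate (s := u ++ replicate i b) (q := m * i)
    (t := x ++ replicate j b ++ replicate (m * j) b ++ z) (by simpa using h₁)
    (by rcases i with _ | i <;> simp)
  rw [flatten_replicate_replicate, flatten_replicate_replicate, add_one_mul, add_one_mul,
    add_comm (m * i), add_comm (m * j), replicate_add, replicate_add, length_append,
    length_replicate, length_replicate,
    show p + m * (i + j) = p + m * j + m * i by ring]
  simpa only [append_assoc] using h₂

end List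

/-- Given finitely many context-free languages `L 0, …, L (r-1)` over an
alphabet containing two distinct letters `one` and `zero`, there exist `Q ≥ 1` and `P`
such that for every `p ≥ P`, every `k` and every `j < r`: if `1·0^p ∈ L j` then
`1·0^(p + k·Q) ∈ L j`. -/
theorem stmt1 {α : Type*} (one zero : α) (hne : one ≠ zero)
    (r : ℕ) (L : Fin r → Language α) (hL : ∀ j, (L j).IsContextFree) :
    ∃ Q : ℕ, 1 ≤ Q ∧ ∃ P : ℕ, ∀ p : ℕ, P ≤ p → ∀ k : ℕ, ∀ j : Fin r,
      one :: List.replicate p zero ∈ L j →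
      one :: List.replicate (p + k * Q) zero ∈ L j := by
  classical
  choose g hg using hL
  choose n hn using fun j => (g j).pumping_lemma_avoiding
  set N := Finset.univ.sup n
  refine ⟨N.factorial, N.factorial_pos, N, fun p hp k j hpj => ?_⟩
  rw [← hg j] at hpj ⊢
  have hnN : n j ≤ N := Finset.le_sup (Finset.mem_univ j)
  obtain ⟨u, v, x, y, z, hw, hv, hy, hpos, hle, hpump⟩ :=
    hn j _ hpj (by simp; omega) one (by simp [List.count_replicate, hne.symm])
  obtain ⟨q, hq⟩ := Nat.dvd_factorial hpos (hle.trans hnN)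
  have := hpump (k * q + 1)
  rwa [List.pump_eq_cons_replicate hw.symm hv hy (List.ne_nil_of_length_pos hpos),
    show p + k * q * (v ++ y).length = p + k * N.factorial by rw [hq]; ring] at this
end

section
/- Let θ > 0 be irrational and let C > 1 be a natural number. Then there exist infinitely many natural numbers m > 0 such that, writing α = {C^m θ} and β = {C^{m+1} θ}, one has C^{−2} < |α − β| < 1 − C^{−2}. -/
/-! Let `xₘ = {Cᵐθ}` and let `dₘ = ⌊C xₘ⌋` be the `m`-th base-`C` digit of `{θ}`, so that
`C xₘ = dₘ + xₘ₊₁`. Eliminating `xₘ₊₁` gives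
`C² (xₘ - xₘ₊₁) = C dₘ - (C - 1)(dₘ₊₁ + xₘ₊₂)`; when `dₘ ≠ dₘ₊₁` this lies strictly between
`1` and `C² - 1` in absolute value, because the digits lie in `[0, C - 1]` and `0 < xₘ₊₂ < 1`.
Consecutive digits differ infinitely often: were they eventually equal to `d`, then
`xₘ - d / (C - 1)` would be multiplied by `C` at each step while staying bounded, so it would
vanish and `xₘ` would be rational. -/

open Filter

lemma Int.fract_natCast_mul_fract {R : Type*} [Ring R] [LinearOrder R] [IsStrictOrderedRing R]
    [FloorRing R] (n : ℕ) (x : R) : Int.fract (n * Int.fract x) = Int.fract (n * x) := by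
  have : (n : R) * Int.fract x = n * x - ((n * ⌊x⌋ : ℤ) : R) := by
    push_cast; rw [Int.fract, mul_sub]
  rw [this, Int.fract_sub_intCast]

lemma Int.fract_pow_succ_mul (C : ℕ) (θ : ℝ) (m : ℕ) :
    Int.fract ((C : ℝ) ^ (m + 1) * θ) = Int.fract (C * Int.fract (C ^ m * θ)) := by
  rw [Int.fract_natCast_mul_fract, pow_succ', mul_assoc]

lemma Irrational.fract {x : ℝ} (hx : Irrational x) : Irrational (Int.fract x) :=
  hx.sub_intCast ⌊x⌋

lemma Irrational.natCast_pow_mul {θ : ℝ} (hθ : Irrational θ) {C : ℕ} (hC : C ≠ 0)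
    (m : ℕ) : Irrational ((C : ℝ) ^ m * θ) := by
  exact_mod_cast hθ.natCast_mul (pow_ne_zero m hC)

lemma floor_natCast_mul_add_one_le {C : ℕ} (hC : 0 < C) {x : ℝ} (hx : x < 1) :
    (⌊(C : ℝ) * x⌋ : ℝ) + 1 ≤ C := by
  have hC' : (0 : ℝ) < C := Nat.cast_pos.mpr hC
  have : ⌊(C : ℝ) * x⌋ < C := Int.floor_lt.mpr (by push_cast; nlinarith)
  exact_mod_cast Int.add_one_le_of_lt this

lemma inv_sq_lt_abs_sub_lt_of_digits_ne {C α β γ : ℝ} {k j : ℤ} (hk : 0 ≤ k) (hj : 0 ≤ j)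
    (hkC : (k : ℝ) + 1 ≤ C) (hjC : (j : ℝ) + 1 ≤ C) (hα : C * α = k + β) (hβ : C * β = j + γ)
    (hγ0 : 0 < γ) (hγ1 : γ < 1) (hkj : k ≠ j) :
    (C ^ 2)⁻¹ < |α - β| ∧ |α - β| < 1 - (C ^ 2)⁻¹ := by
  have hk' : (0 : ℝ) ≤ k := by exact_mod_cast hk
  have hj' : (0 : ℝ) ≤ j := by exact_mod_cast hj
  have hscaled : C ^ 2 * (α - β) = C * k - (C - 1) * (j + γ) := by
    linear_combination C * hα - C * hβ + hβ
  have hbounds : 1 < C ^ 2 * |α - β| ∧ C ^ 2 * |α - β| < C ^ 2 - 1 := by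
    rcases lt_or_gt_of_ne hkj with hlt | hgt
    · have hkj' : (k : ℝ) + 1 ≤ j := by exact_mod_cast Int.add_one_le_of_lt hlt
      have hneg : α - β < 0 := by nlinarith
      rw [abs_of_neg hneg]
      constructor <;> nlinarith
    · have hjk' : (j : ℝ) + 1 ≤ k := by exact_mod_cast Int.add_one_le_of_lt hgt
      have hpos : 0 < α - β := by nlinarith
      rw [abs_of_pos hpos]
      constructor <;> nlinarith
  have hC2 : (0 : ℝ) < C ^ 2 := by nlinarith
  have hinv : C ^ 2 * (C ^ 2)⁻¹ = 1 := mul_inv_cancel₀ hC2.ne'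
  constructor <;> nlinarith [abs_nonneg (α - β)]

lemma inv_sq_lt_abs_sub_fract_mul_lt {C : ℕ} (hC : 0 < C) {α : ℝ} (hα0 : 0 ≤ α)
    (hα1 : α < 1) (hγ : 0 < Int.fract (C * Int.fract (C * α)))
    (hne : ⌊(C : ℝ) * α⌋ ≠ ⌊(C : ℝ) * Int.fract (C * α)⌋) :
    ((C : ℝ) ^ 2)⁻¹ < |α - Int.fract (C * α)| ∧
      |α - Int.fract (C * α)| < 1 - ((C : ℝ) ^ 2)⁻¹ :=
  inv_sq_lt_abs_sub_lt_of_digits_ne (Int.floor_nonneg.mpr (by positivity))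
    (Int.floor_nonneg.mpr (by positivity)) (floor_natCast_mul_add_one_le hC hα1)
    (floor_natCast_mul_add_one_le hC (Int.fract_lt_one _)) (Int.floor_add_fract _).symm
    (Int.floor_add_fract _).symm hγ (Int.fract_lt_one _) hne

lemma eq_div_sub_one_of_bounded_of_mul_sub {c d B : ℝ} (hc : 1 < c) {x : ℕ → ℝ}
    (hx : ∀ n, x (n + 1) = c * x n - d) (hB : ∀ n, |x n| ≤ B) : x 0 = d / (c - 1) := by
  set p := d / (c - 1)
  have hp : c * p - d = p := by
    simp only [p]; field_simp [(sub_pos.mpr hc).ne']; ring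
  have hgeom : ∀ n, x n - p = c ^ n * (x 0 - p) := by
    intro n
    induction n with
    | zero => simp
    | succ n ih => rw [hx, pow_succ', mul_assoc, ← ih]; linear_combination hp
  by_contra hne
  have hpos : 0 < |x 0 - p| := abs_pos.mpr (sub_ne_zero.mpr hne)
  obtain ⟨n, hn⟩ := pow_unbounded_of_one_lt ((B + |p|) / |x 0 - p|) hc
  have hgrow : B + |p| < |x n - p| := by
    rw [hgeom, abs_mul, abs_of_pos (by positivity : (0 : ℝ) < c ^ n)]
    rwa [div_lt_iff₀ hpos] at hn
  linarith [abs_sub (x n) p, hB n]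

lemma frequently_floor_mul_fract_pow_ne {C : ℕ} (hC : 1 < C) {θ : ℝ} (hθ : Irrational θ) :
    ∃ᶠ m in atTop,
      ⌊(C : ℝ) * Int.fract (C ^ m * θ)⌋ ≠ ⌊(C : ℝ) * Int.fract (C ^ (m + 1) * θ)⌋ := by
  rw [frequently_atTop]
  intro N
  by_contra! hconst
  set x : ℕ → ℝ := fun n => Int.fract ((C : ℝ) ^ (N + n) * θ)
  set d := ⌊(C : ℝ) * x 0⌋
  have hdigit : ∀ n, ⌊(C : ℝ) * x n⌋ = d := by
    intro n
    induction n with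
    | zero => rfl
    | succ n ih => rw [← ih]; exact (hconst (N + n) (by omega)).symm
  have hrec : ∀ n, x (n + 1) = C * x n - d := fun n => by
    rw [← hdigit n, Int.self_sub_floor]; exact Int.fract_pow_succ_mul C θ (N + n)
  have hbdd : ∀ n, |x n| ≤ 1 := fun n =>
    (abs_of_nonneg (Int.fract_nonneg _)).trans_le (Int.fract_lt_one _).le
  have hx0 := eq_div_sub_one_of_bounded_of_mul_sub (by exact_mod_cast hC) hrec hbdd
  exact (hθ.natCast_pow_mul (by omega : C ≠ 0) N).fract
    ⟨(d : ℚ) / ((C : ℚ) - 1), by push_cast; exact hx0.symm⟩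

theorem stmt2_general (θ : ℝ) (hθ : Irrational θ) (C : ℕ) (hC : 1 < C) :
    {m : ℕ | 0 < m ∧
      ((C : ℝ) ^ 2)⁻¹ < |Int.fract ((C : ℝ) ^ m * θ) - Int.fract ((C : ℝ) ^ (m + 1) * θ)| ∧
      |Int.fract ((C : ℝ) ^ m * θ) - Int.fract ((C : ℝ) ^ (m + 1) * θ)| <
        1 - ((C : ℝ) ^ 2)⁻¹}.Infinite := by
  have hdigits := Nat.frequently_atTop_iff_infinite.mp (frequently_floor_mul_fract_pow_ne hC hθ)
  refine (hdigits.sdiff (Set.finite_singleton 0)).mono ?_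
  rintro m ⟨hne, hm0⟩
  have hγ : 0 < Int.fract ((C : ℝ) ^ (m + 2) * θ) :=
    Int.fract_pos.mpr ((hθ.natCast_pow_mul (by omega) (m + 2)).ne_int _)
  rw [Int.fract_pow_succ_mul, Int.fract_pow_succ_mul] at hγ
  rw [Set.mem_ofPred_eq, Int.fract_pow_succ_mul] at hne
  rw [Set.mem_ofPred_eq, Int.fract_pow_succ_mul]
  exact ⟨Nat.pos_of_ne_zero hm0,
    inv_sq_lt_abs_sub_fract_mul_lt (by omega) (Int.fract_nonneg _) (Int.fract_lt_one _) hγ hne⟩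

/-- Clinger's Lemma 9, weak form. If `θ > 0` is irrational and `C > 1`
is a natural number, then there are infinitely many `m > 0` such that, with
`α = {C^m θ}` and `β = {C^(m+1) θ}`, we have `C⁻² < |α - β| < 1 - C⁻²`. -/
theorem stmt2 (θ : ℝ) (hθpos : 0 < θ) (hθ : Irrational θ) (C : ℕ) (hC : 1 < C) :
    {m : ℕ | 0 < m ∧
      ((C : ℝ) ^ 2)⁻¹ < |Int.fract ((C : ℝ) ^ m * θ) - Int.fract ((C : ℝ) ^ (m + 1) * θ)| ∧
      |Int.fract ((C : ℝ) ^ m * θ) - Int.fract ((C : ℝ) ^ (m + 1) * θ)| <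
        1 - ((C : ℝ) ^ 2)⁻¹}.Infinite :=
  stmt2_general θ hθ C hC
end

section
/- Let θ > 0 be irrational and let C > 1 be an integer. Then there exist a positive integer K and a strictly increasing sequence of natural numbers m₁ < m₂ < ⋯ such that the limit L = lim_{i→∞} |{K C^{m_i} θ} − {K C^{m_i+1} θ}| exists and satisfies either 1/3 ≤ L ≤ 1/2 or 1/2 ≤ L ≤ 2/3. -/
/-!
Write `‖x‖` for the distance from `x` to the nearest integer, the norm of `x` in `ℝ/ℤ`, and put
`φ = (C - 1)θ`, so that `K C^(m+1) θ - K C^m θ = K C^m φ`. Since `{x} - {y} ≡ x - y` modulo `1`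
and `|{x} - {y}| < 1`, we have `‖x - y‖ ≤ |{x} - {y}| ≤ 1 - ‖x - y‖`. It therefore suffices to
find `K` with `‖K C^m φ‖ ≥ 1/3` for infinitely many `m`: the corresponding differences lie in
`[1/3, 2/3]`, and a subsequence converges.

If there were no such `K`, then for every `j` and all large `m` we would have
`‖2^i C^m φ‖ < 1/3` for all `i ≤ j`. As `‖x‖, ‖2x‖ < 1/3` forces `‖2x‖ = 2‖x‖`, this gives
`‖C^m φ‖ < 1/(3·2^j) < 1/(2C)` for large `m`. But `‖Cx‖ = C‖x‖` as soon as `C‖x‖ ≤ 1/2`, so from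
some point on `‖C^m φ‖` would grow geometrically, unless `C^m φ` is an integer, which the
irrationality of `θ` rules out.
-/

open Filter

namespace UnitAddCircle

theorem exists_coe_eq_abs_eq_norm (a : UnitAddCircle) :
    ∃ x : ℝ, (x : UnitAddCircle) = a ∧ |x| = ‖a‖ := by
  obtain ⟨x, rfl⟩ := QuotientAddGroup.mk_surjective a
  exact ⟨x - round x, by simp, norm_eq.symm⟩

theorem norm_coe_eq_abs {x : ℝ} (h : |x| ≤ 1 / 2) : ‖(x : UnitAddCircle)‖ = |x| :=
  (AddCircle.norm_coe_eq_abs_iff (p := 1) one_ne_zero).2 (by simpa using h)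

theorem norm_coe_le_abs_sub_intCast (x : ℝ) (n : ℤ) : ‖(x : UnitAddCircle)‖ ≤ |x - n| :=
  norm_eq ▸ round_le x n

theorem norm_nsmul_eq_mul_norm {a : UnitAddCircle} {n : ℕ} (h : n * ‖a‖ ≤ 1 / 2) :
    ‖n • a‖ = n * ‖a‖ := by
  obtain ⟨x, rfl, hx⟩ := exists_coe_eq_abs_eq_norm a
  have habs : |n * x| = n * ‖(x : UnitAddCircle)‖ := by rw [abs_mul, Nat.abs_cast, hx]
  rw [← AddCircle.coe_nsmul, nsmul_eq_mul, norm_coe_eq_abs (habs ▸ h), habs]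

theorem norm_two_nsmul_of_quarter_lt {a : UnitAddCircle} (h : 1 / 4 < ‖a‖) :
    ‖2 • a‖ = 1 - 2 * ‖a‖ := by
  obtain ⟨x, rfl, hx⟩ := exists_coe_eq_abs_eq_norm a
  have hhalf : |x| ≤ 1 / 2 := by
    simpa [hx] using AddCircle.norm_le_half_period 1 (x := (x : UnitAddCircle)) one_ne_zero
  rw [← hx] at h ⊢
  rw [← AddCircle.coe_nsmul, nsmul_eq_mul]
  rcases abs_cases x with ⟨hx', hx0⟩ | ⟨hx', hx0⟩
  · rw [← sub_add_cancel ((2 : ℕ) * x) 1, AddCircle.coe_add_period, norm_coe_eq_abs] <;>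
      rw [abs_of_nonpos] <;> push_cast <;> linarith
  · rw [← AddCircle.coe_add_period, norm_coe_eq_abs] <;>
      rw [abs_of_nonneg] <;> push_cast <;> linarith

theorem norm_two_nsmul_eq_of_lt_third {a : UnitAddCircle} (ha : ‖a‖ < 1 / 3)
    (h2a : ‖2 • a‖ < 1 / 3) : ‖2 • a‖ = 2 * ‖a‖ := by
  rcases le_or_gt ‖a‖ (1 / 4) with hle | hlt
  · exact_mod_cast norm_nsmul_eq_mul_norm (n := 2) (by push_cast; linarith)
  · rw [norm_two_nsmul_of_quarter_lt hlt] at h2a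
    linarith

theorem two_pow_mul_norm_lt_third {a : UnitAddCircle} {j : ℕ}
    (h : ∀ i ≤ j, ‖2 ^ i • a‖ < 1 / 3) : 2 ^ j * ‖a‖ < 1 / 3 := by
  suffices ‖2 ^ j • a‖ = 2 ^ j * ‖a‖ from this ▸ h j le_rfl
  induction j with
  | zero => simp
  | succ j ih =>
    have h2 : ‖2 • 2 ^ j • a‖ < 1 / 3 := by rw [← mul_nsmul, ← pow_succ]; exact h _ le_rfl
    rw [pow_succ, mul_nsmul, norm_two_nsmul_eq_of_lt_third (h j j.le_succ) h2,
      ih fun i hi => h i (hi.trans j.le_succ), pow_succ]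
    ring

theorem eq_zero_of_forall_norm_pow_nsmul_le {a : UnitAddCircle} {C : ℕ} (hC : 1 < C)
    (h : ∀ t, ‖C ^ t • a‖ ≤ 1 / (2 * C)) : a = 0 := by
  have hgrow : ∀ t, ‖C ^ t • a‖ = C ^ t * ‖a‖ := by
    intro t
    induction t with
    | zero => simp
    | succ t ih =>
      rw [pow_succ, mul_nsmul, norm_nsmul_eq_mul_norm (a := C ^ t • a), ih, pow_succ]
      · ring
      · calc (C : ℝ) * ‖C ^ t • a‖ ≤ C * (1 / (2 * C)) := by gcongr; exact h t
          _ = 1 / 2 := by field_simp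
  by_contra ha
  obtain ⟨t, ht⟩ := pow_unbounded_of_one_lt (1 / (2 * C) / ‖a‖) (by exact_mod_cast hC : (1 : ℝ) < C)
  rw [div_lt_iff₀ (norm_pos_iff.2 ha), ← hgrow] at ht
  exact (h t).not_gt ht

theorem exists_frequently_third_le_norm {a : UnitAddCircle} (ha : ¬IsOfFinAddOrder a) {C : ℕ}
    (hC : 1 < C) : ∃ K : ℕ, 0 < K ∧ ∃ᶠ m in atTop, 1 / 3 ≤ ‖(K * C ^ m) • a‖ := by
  by_contra! H
  obtain ⟨j, hj⟩ : ∃ j, C < 2 ^ j := ⟨C, Nat.lt_two_pow_self⟩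
  have hev : ∀ᶠ m in atTop, ∀ i ∈ Finset.range (j + 1), ‖(2 ^ i * C ^ m) • a‖ < 1 / 3 :=
    (eventually_all_finset _).2 fun i _ => H _ (by positivity)
  obtain ⟨M, hM⟩ := hev.exists_forall_of_atTop
  refine ha (isOfFinAddOrder_iff_nsmul_eq_zero.2
    ⟨C ^ M, by positivity, eq_zero_of_forall_norm_pow_nsmul_le hC fun t => ?_⟩)
  have hsmall := two_pow_mul_norm_lt_third (a := C ^ t • C ^ M • a) (j := j) fun i hi => by
    rw [smul_smul, smul_smul, mul_assoc, ← pow_add]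
    exact hM (t + M) (by omega) i (Finset.mem_range_succ_iff.2 hi)
  have hj' : (C : ℝ) < 2 ^ j := by exact_mod_cast hj
  rw [le_div_iff₀ (by positivity)]
  nlinarith [norm_nonneg (C ^ t • C ^ M • a)]

theorem abs_fract_sub_fract_mem_Icc (x y : ℝ) :
    |Int.fract x - Int.fract y| ∈
      Set.Icc ‖((x - y : ℝ) : UnitAddCircle)‖ (1 - ‖((x - y : ℝ) : UnitAddCircle)‖) := by
  set u := Int.fract x - Int.fract y
  have hu : ((x - y : ℝ) : UnitAddCircle) = u := by
    simp only [u, AddCircle.coe_sub, AddCircle.coe_fract]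
  have hu1 : |u| < 1 := by
    rw [abs_sub_lt_iff]
    constructor <;> linarith [Int.fract_nonneg x, Int.fract_lt_one x, Int.fract_nonneg y,
      Int.fract_lt_one y]
  rw [hu]
  refine ⟨by simpa using norm_coe_le_abs_sub_intCast u 0, ?_⟩
  rcases abs_cases u with ⟨hu', hu0⟩ | ⟨hu', hu0⟩
  · have := norm_coe_le_abs_sub_intCast u 1
    rw [abs_of_nonpos (by push_cast; linarith)] at this
    push_cast at this
    linarith
  · have := norm_coe_le_abs_sub_intCast u (-1)
    rw [abs_of_nonneg (by push_cast; linarith)] at this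
    push_cast at this
    linarith

end UnitAddCircle

open UnitAddCircle in
theorem stmt4_general (θ : ℝ) (hθ : Irrational θ) (C : ℤ) (hC : 1 < C) :
    ∃ K : ℕ, 0 < K ∧ ∃ m : ℕ → ℕ, StrictMono m ∧ ∃ L : ℝ,
      Tendsto (fun i =>
          |Int.fract ((K : ℝ) * (C : ℝ) ^ (m i) * θ) -
            Int.fract ((K : ℝ) * (C : ℝ) ^ (m i + 1) * θ)|) atTop (nhds L) ∧
      ((1 / 3 ≤ L ∧ L ≤ 1 / 2) ∨ (1 / 2 ≤ L ∧ L ≤ 2 / 3)) := by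
  lift C to ℕ using by omega
  set a : UnitAddCircle := ((((C : ℤ) - 1 : ℤ) * θ : ℝ) : UnitAddCircle)
  have ha : ¬IsOfFinAddOrder a := AddCircle.not_isOfFinAddOrder_iff_forall_rat_ne_div.2 fun q => by
    simpa using ((hθ.intCast_mul (by omega : (C : ℤ) - 1 ≠ 0)).ne_rat q).symm
  obtain ⟨K, hK, hfreq⟩ := exists_frequently_third_le_norm ha (by exact_mod_cast hC)
  obtain ⟨m, hm, hm3⟩ := extraction_of_frequently_atTop hfreq
  have hdiff (n : ℕ) : (((K : ℝ) * (C : ℤ) ^ n * θ - (K : ℝ) * (C : ℤ) ^ (n + 1) * θ : ℝ) :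
      UnitAddCircle) = -((K * C ^ n) • a) := by
    rw [← AddCircle.coe_nsmul, ← AddCircle.coe_neg]
    push_cast
    ring_nf
  have hmem (i : ℕ) : |Int.fract ((K : ℝ) * (C : ℤ) ^ (m i) * θ) -
      Int.fract ((K : ℝ) * (C : ℤ) ^ (m i + 1) * θ)| ∈ Set.Icc (1 / 3 : ℝ) (2 / 3) := by
    have ⟨h1, h2⟩ := abs_fract_sub_fract_mem_Icc ((K : ℝ) * (C : ℤ) ^ (m i) * θ)
      ((K : ℝ) * (C : ℤ) ^ (m i + 1) * θ)
    rw [hdiff, norm_neg] at h1 h2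
    exact ⟨(hm3 i).trans h1, by linarith [hm3 i]⟩
  obtain ⟨L, hL, ψ, hψ, hlim⟩ := isCompact_Icc.tendsto_subseq hmem
  exact ⟨K, hK, m ∘ ψ, hm.comp hψ, L, hlim, (le_total L (1 / 2)).imp (⟨hL.1, ·⟩) (⟨·, hL.2⟩)⟩

/-- If `θ > 0` is irrational and `C > 1` is an integer, then there exist
`K > 0` and a strictly increasing sequence `m₁ < m₂ < ⋯` of naturals such that
`L = lim_i |{K C^(m_i) θ} - {K C^(m_i + 1) θ}|` exists and satisfies
either `1/3 ≤ L ≤ 1/2` or `1/2 ≤ L ≤ 2/3`. -/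
theorem stmt4 (θ : ℝ) (hθpos : 0 < θ) (hθ : Irrational θ) (C : ℤ) (hC : 1 < C) :
    ∃ K : ℕ, 0 < K ∧ ∃ m : ℕ → ℕ, StrictMono m ∧ ∃ L : ℝ,
      Tendsto (fun i =>
          |Int.fract ((K : ℝ) * (C : ℝ) ^ (m i) * θ) -
            Int.fract ((K : ℝ) * (C : ℝ) ^ (m i + 1) * θ)|) atTop (nhds L) ∧
      ((1 / 3 ≤ L ∧ L ≤ 1 / 2) ∨ (1 / 2 ≤ L ∧ L ≤ 2 / 3)) :=
  stmt4_general θ hθ C hC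
end

section
/- Let θ > 0 be irrational, and let (α_i)_{i≥1} and (β_i)_{i≥1} be sequences of reals with α_i, β_i ∈ (0,1) such that the limit lim_{i→∞} |α_i − β_i| exists and either 1/3 ≤ lim|α_i − β_i| ≤ 1/2 or 1/2 ≤ lim|α_i − β_i| ≤ 2/3. Then there exist a strictly increasing sequence of indices i(1) < i(2) < ⋯ and an integer q ≥ 0 such that the limit lim_{j→∞} |{α_{i(j)} + qθ} − {β_{i(j)} + qθ}| exists and satisfies 1/3 ≤ lim_{j→∞} |{α_{i(j)} + qθ} − {β_{i(j)} + qθ}| ≤ 1/2. -/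
open Filter

private lemma fract_shift (x y : ℝ) : Int.fract (x + y) = Int.fract (x + Int.fract y) := by
  have h : x + y = (x + Int.fract y) + (⌊y⌋ : ℤ) := by rw [Int.fract]; ring
  rw [h, Int.fract_add_intCast]

private lemma near_ends (θ : ℝ) (hθ : Irrational θ) {ε : ℝ} (hε0 : 0 < ε) (hε1 : ε < 1) :
    ∃ n : ℕ, 0 < Int.fract ((n : ℝ) * θ) ∧
      (Int.fract ((n : ℝ) * θ) < ε ∨ 1 - ε < Int.fract ((n : ℝ) * θ)) := by
  rcases AddSubgroup.dense_or_cyclic (AddSubgroup.closure {θ, 1}) with hd | ⟨a, ha⟩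
  · obtain ⟨s, hsS, hs⟩ := hd.exists_mem_open isOpen_Ioo (Set.nonempty_Ioo.mpr hε0)
    obtain ⟨m, n, hmn⟩ := (AddSubgroup.mem_closure_pair).1 hsS
    rw [zsmul_eq_mul, zsmul_eq_mul, mul_one] at hmn
    have hs0 : 0 < s := hs.1
    have hs1 : s < ε := hs.2
    have hfm : Int.fract ((m : ℝ) * θ) = s := by
      have h1 : (m : ℝ) * θ + (n : ℤ) = s := by push_cast; linarith [hmn]
      rw [← Int.fract_add_intCast ((m : ℝ) * θ) n, h1, Int.fract_eq_self]
      constructor <;> linarith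
    have hm0 : m ≠ 0 := by
      rintro rfl
      rw [Int.cast_zero, zero_mul, Int.fract_zero] at hfm
      linarith
    rcases lt_or_gt_of_ne hm0 with hm | hm
    · refine ⟨(-m).toNat, ?_, Or.inr ?_⟩ <;>
      · have hcast : (((-m).toNat : ℕ) : ℝ) * θ = -((m : ℝ) * θ) := by
          have : ((-m).toNat : ℤ) = -m := Int.toNat_of_nonneg (by omega)
          have h2 : (((-m).toNat : ℕ) : ℝ) = -(m : ℝ) := by
            exact_mod_cast congrArg (Int.cast : ℤ → ℝ) this
          rw [h2]; ring
        rw [hcast, Int.fract_neg (by rw [hfm]; linarith), hfm]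
        linarith
    · refine ⟨m.toNat, ?_, Or.inl ?_⟩ <;>
      · have h2 : ((m.toNat : ℕ) : ℝ) = (m : ℝ) := by
          exact_mod_cast congrArg (Int.cast : ℤ → ℝ) (Int.toNat_of_nonneg (by omega : 0 ≤ m))
        rw [h2, hfm]
        linarith
  · exfalso
    have hθmem : θ ∈ AddSubgroup.closure ({θ, 1} : Set ℝ) :=
      AddSubgroup.subset_closure (by simp)
    have h1mem : (1 : ℝ) ∈ AddSubgroup.closure ({θ, 1} : Set ℝ) :=
      AddSubgroup.subset_closure (by simp)
    rw [ha, AddSubgroup.mem_closure_singleton] at hθmem h1mem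
    obtain ⟨p, hp⟩ := hθmem
    obtain ⟨r, hr⟩ := h1mem
    rw [zsmul_eq_mul] at hp hr
    have hr0 : (r : ℝ) ≠ 0 := by
      rintro h; rw [h, zero_mul] at hr; exact one_ne_zero hr.symm
    apply hθ
    refine ⟨(p : ℚ) / (r : ℚ), ?_⟩
    have ha0 : a = 1 / (r : ℝ) := by field_simp; linarith
    push_cast
    rw [← hp, ha0]
    field_simp

private lemma mult_step (δ c : ℝ) (hδ0 : 0 < δ) (hc : 0 < c) :
    ∃ k : ℕ, c < (k : ℝ) * δ ∧ (k : ℝ) * δ ≤ c + δ := by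
  refine ⟨(⌊c / δ⌋).toNat + 1, ?_, ?_⟩
  all_goals
    have hfl : ((⌊c / δ⌋).toNat : ℝ) = (⌊c / δ⌋ : ℝ) := by
      exact_mod_cast congrArg (Int.cast : ℤ → ℝ)
        (Int.toNat_of_nonneg (Int.floor_nonneg.2 (by positivity)))
    have h1 : c / δ < ((⌊c / δ⌋ : ℝ) + 1) := Int.lt_floor_add_one _
    have h2 : (⌊c / δ⌋ : ℝ) ≤ c / δ := Int.floor_le _
    have h3 : (c / δ) * δ = c := by field_simp
    push_cast
    rw [hfl]
  · nlinarith
  · nlinarith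

/-- There is a natural `q` with `fract (q θ) ∈ (1/4, 1/2)`. -/
private lemma exists_good_q (θ : ℝ) (hθ : Irrational θ) :
    ∃ q : ℕ, 1/4 < Int.fract ((q : ℝ) * θ) ∧ Int.fract ((q : ℝ) * θ) < 1/2 := by
  obtain ⟨n, hn0, hn⟩ := near_ends θ hθ (by norm_num : (0:ℝ) < 1/4) (by norm_num)
  rcases hn with hsmall | hbig
  · obtain ⟨δ, hδeq, hδ0, hδ1⟩ :
        ∃ δ : ℝ, Int.fract ((n : ℝ) * θ) = δ ∧ 0 < δ ∧ δ < 1/4 :=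
      ⟨_, rfl, hn0, hsmall⟩
    obtain ⟨k, hkδ1, hkδ2⟩ := mult_step δ (1/4) hδ0 (by norm_num)
    refine ⟨k * n, ?_, ?_⟩ <;>
    · have hf : Int.fract (((k * n : ℕ) : ℝ) * θ) = (k : ℝ) * δ := by
        have h4 : ((k * n : ℕ) : ℝ) * θ
            = (k : ℝ) * δ + (((k : ℕ) : ℤ) * ⌊(n : ℝ) * θ⌋ : ℤ) := by
          push_cast; rw [← hδeq, Int.fract]; ring
        rw [h4, Int.fract_add_intCast, Int.fract_eq_self.2 ⟨by nlinarith, by linarith⟩]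
      rw [hf]; linarith
  · obtain ⟨δ, hδeq, hδ0, hδ1⟩ :
        ∃ δ : ℝ, Int.fract ((n : ℝ) * θ) = 1 - δ ∧ 0 < δ ∧ δ < 1/4 := by
      refine ⟨1 - Int.fract ((n : ℝ) * θ), by ring, ?_, by linarith⟩
      have := Int.fract_lt_one ((n : ℝ) * θ); linarith
    obtain ⟨k, hkδ1, hkδ2⟩ := mult_step δ (1/2) hδ0 (by norm_num)
    have hfr : Int.fract ((k : ℝ) * δ) = (k : ℝ) * δ :=
      Int.fract_eq_self.2 ⟨by linarith, by linarith⟩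
    have hne : Int.fract ((k : ℝ) * δ) ≠ 0 := by rw [hfr]; linarith
    refine ⟨k * n, ?_, ?_⟩ <;>
    · have hf : Int.fract (((k * n : ℕ) : ℝ) * θ) = 1 - (k : ℝ) * δ := by
        have h4 : ((k * n : ℕ) : ℝ) * θ
            = -((k : ℝ) * δ) + (((k : ℕ) : ℤ) * ⌊(n : ℝ) * θ⌋ + ((k : ℕ) : ℤ) : ℤ) := by
          push_cast
          have h5 : (n : ℝ) * θ = (⌊(n : ℝ) * θ⌋ : ℝ) + (1 - δ) := by
            rw [← hδeq, Int.fract]; ring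
          nlinarith [h5]
        rw [h4, Int.fract_add_intCast, Int.fract_neg hne, hfr]
      rw [hf]; linarith

/-- If `fract (qθ)` lies in `[1-a, 1-b)` with `0 < b < a < 1`, the fractional parts flip. -/
private lemma key_flip (θ a b : ℝ) (q : ℕ) (ha1 : a < 1) (hb0 : 0 < b) (hba : b < a)
    (h1 : 1 - a ≤ Int.fract ((q : ℝ) * θ)) (h2 : Int.fract ((q : ℝ) * θ) < 1 - b) :
    |Int.fract (a + (q : ℝ) * θ) - Int.fract (b + (q : ℝ) * θ)| = 1 - (a - b) := by
  have ht0 := Int.fract_nonneg ((q : ℝ) * θ)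
  have ht1 := Int.fract_lt_one ((q : ℝ) * θ)
  set t := Int.fract ((q : ℝ) * θ) with htdef
  have hfa : Int.fract (a + (q : ℝ) * θ) = a + t - 1 := by
    rw [fract_shift, ← htdef]
    have h3 : a + t = (a + t - 1) + ((1 : ℤ) : ℝ) := by push_cast; ring
    rw [h3, Int.fract_add_intCast, Int.fract_eq_self.2 ⟨by linarith, by linarith⟩]
    push_cast
    ring
  have hfb : Int.fract (b + (q : ℝ) * θ) = b + t := by
    rw [fract_shift, ← htdef, Int.fract_eq_self.2 ⟨by linarith, by linarith⟩]
  rw [hfa, hfb]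
  rw [abs_of_nonpos (by linarith)]
  ring

/-- Let `θ > 0` be irrational and `(α_i)`, `(β_i)` sequences in `(0,1)`
such that `lim |α_i - β_i|` exists and lies in `[1/3, 1/2]` or in `[1/2, 2/3]`. Then there
is a strictly increasing sequence of indices `i(j)` and an integer `q ≥ 0` such that
`lim_j |{α_{i(j)} + qθ} - {β_{i(j)} + qθ}|` exists and lies in `[1/3, 1/2]`. -/
theorem stmt5 (θ : ℝ) (hθpos : 0 < θ) (hθ : Irrational θ)
    (α β : ℕ → ℝ) (hα : ∀ i, α i ∈ Set.Ioo (0 : ℝ) 1) (hβ : ∀ i, β i ∈ Set.Ioo (0 : ℝ) 1)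
    (L : ℝ) (hlim : Tendsto (fun i => |α i - β i|) atTop (nhds L))
    (hL : (1 / 3 ≤ L ∧ L ≤ 1 / 2) ∨ (1 / 2 ≤ L ∧ L ≤ 2 / 3)) :
    ∃ φ : ℕ → ℕ, StrictMono φ ∧ ∃ q : ℕ, ∃ L' : ℝ,
      Tendsto (fun j =>
          |Int.fract (α (φ j) + (q : ℝ) * θ) - Int.fract (β (φ j) + (q : ℝ) * θ)|)
        atTop (nhds L') ∧
      1 / 3 ≤ L' ∧ L' ≤ 1 / 2 := by
  rcases le_or_gt L (1/2) with hL2 | hL2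
  · -- take q = 0, φ = id
    have hL3 : 1/3 ≤ L := by rcases hL with ⟨h, _⟩ | ⟨h, _⟩ <;> linarith
    refine ⟨id, strictMono_id, 0, L, ?_, by linarith, by linarith⟩
    have heq : (fun j => |Int.fract (α (id j) + ((0:ℕ) : ℝ) * θ)
        - Int.fract (β (id j) + ((0:ℕ) : ℝ) * θ)|) = fun i => |α i - β i| := by
      funext i
      simp only [id_eq, Nat.cast_zero, zero_mul, add_zero]
      rw [Int.fract_eq_self.2 ⟨(hα i).1.le, (hα i).2⟩,
        Int.fract_eq_self.2 ⟨(hβ i).1.le, (hβ i).2⟩]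
    rw [heq]
    exact hlim
  · -- L ∈ (1/2, 2/3]
    have hL3 : L ≤ 2/3 := by
      rcases hL with ⟨_, h⟩ | ⟨_, h⟩; · linarith
      · exact h
    obtain ⟨q₁, ht1a, ht1b⟩ := exists_good_q θ hθ
    set t₁ := Int.fract ((q₁ : ℝ) * θ) with ht1def
    have ht2 : Int.fract (((2 * q₁ : ℕ) : ℝ) * θ) = 2 * t₁ := by
      have h4 : ((2 * q₁ : ℕ) : ℝ) * θ = 2 * t₁ + ((2 * ⌊(q₁ : ℝ) * θ⌋ : ℤ) : ℝ) := by
        push_cast; rw [ht1def, Int.fract]; ring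
      rw [h4, Int.fract_add_intCast, Int.fract_eq_self.2 ⟨by linarith, by linarith⟩]
    -- eventually the distance exceeds 1/2
    have hev : ∀ᶠ i in atTop, 1/2 < |α i - β i| := hlim.eventually (eventually_gt_nhds hL2)
    have hPev : ∀ᶠ i in atTop,
        (|Int.fract (α i + (q₁ : ℝ) * θ) - Int.fract (β i + (q₁ : ℝ) * θ)|
            = 1 - |α i - β i|) ∨
        (|Int.fract (α i + ((2 * q₁ : ℕ) : ℝ) * θ) - Int.fract (β i + ((2 * q₁ : ℕ) : ℝ) * θ)|
            = 1 - |α i - β i|) := by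
      filter_upwards [hev] with i hi
      obtain ⟨ha0, ha1⟩ := hα i
      obtain ⟨hb0, hb1⟩ := hβ i
      rcases abs_cases (α i - β i) with ⟨habs, hd⟩ | ⟨habs, hd⟩
      · -- α i > β i
        have hd' : 1/2 < α i - β i := by rw [habs] at hi; exact hi
        rcases le_or_gt (1 - α i) t₁ with hc | hc
        · left
          rw [key_flip θ (α i) (β i) q₁ ha1 hb0 (by linarith) hc (by linarith), habs]
        · right
          rw [key_flip θ (α i) (β i) (2 * q₁) ha1 hb0 (by linarith) (by rw [ht2]; linarith)
            (by rw [ht2]; linarith), habs]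
      · -- β i > α i
        have hd' : 1/2 < β i - α i := by rw [habs] at hi; linarith
        rcases le_or_gt (1 - β i) t₁ with hc | hc
        · left
          rw [abs_sub_comm,
            key_flip θ (β i) (α i) q₁ hb1 ha0 (by linarith) hc (by linarith), habs]
          ring
        · right
          rw [abs_sub_comm,
            key_flip θ (β i) (α i) (2 * q₁) hb1 ha0 (by linarith) (by rw [ht2]; linarith)
              (by rw [ht2]; linarith), habs]
          ring
    rcases frequently_or_distrib.1 hPev.frequently with hfreq | hfreq
    · obtain ⟨φ, hφ, hP⟩ := extraction_of_frequently_atTop hfreq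
      refine ⟨φ, hφ, q₁, 1 - L, ?_, by linarith, by linarith⟩
      exact (tendsto_const_nhds.sub (hlim.comp hφ.tendsto_atTop)).congr
        fun j => (hP j).symm
    · obtain ⟨φ, hφ, hP⟩ := extraction_of_frequently_atTop hfreq
      refine ⟨φ, hφ, 2 * q₁, 1 - L, ?_, by linarith, by linarith⟩
      exact (tendsto_const_nhds.sub (hlim.comp hφ.tendsto_atTop)).congr
        fun j => (hP j).symm
end

section
/- Let θ > 0 be irrational, let C > 1 be an integer, and let 0 < a < b < 1 with b − a < 1/3. Then there exist a positive integer K, a nonnegative integer r, and infinitely many natural numbers m such that {(K·C^m + r)·θ} < a and {(K·C^{m+1} + r)·θ} > b. -/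
/-!
Write `‖x‖` for the distance from `x` to the nearest integer. Multiplication by `C` scales `‖x‖`
by `C` as long as `‖x‖ < 1 / (2C)`, so the irrationality of `(C - 1) θ` forces
`‖(C - 1) C^m θ‖ ≥ 1 / (2C)` for infinitely many `m`. A cluster point `β` of `{C^m θ}` along these
`m` then has `{(C - 1) β} > 0`. Take `K` with `δ = K {(C - 1) β} ∈ (b - a, 1)` and, by density of
the forward orbit of the rotation by `θ`, `r` with `{Kβ + rθ} ∈ (b - δ, a)`; then
`{KCβ + rθ} = {Kβ + rθ} + δ > b`. Both conditions are open in `β`, so they hold at `{C^m θ}` for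
infinitely many `m`, and `{(K C^m + r) θ} = {K {C^m θ} + rθ}`,
`{(K C^(m+1) + r) θ} = {KC {C^m θ} + rθ}`.
-/

open Set Filter Topology

theorem exists_nat_fract_add_mul_mem_Ioo {θ : ℝ} (hθ : Irrational θ) (c : ℝ) {u v : ℝ}
    (hu : 0 ≤ u) (huv : u < v) (hv : v ≤ 1) :
    ∃ r : ℕ, Int.fract (c + r * θ) ∈ Ioo u v := by
  have hdense : DenseRange (fun n : ℕ => n • (θ : UnitAddCircle)) :=
    denseRange_zsmul_iff_nsmul.1 (AddCircle.denseRange_zsmul_coe_iff.2 (by simpa using hθ))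
  obtain ⟨r, x, ⟨hux, hxv⟩, hrx⟩ := hdense.exists_mem_open
    (QuotientAddGroup.isOpenMap_coe _ isOpen_Ioo)
    ((nonempty_Ioo.2 (sub_lt_sub_right huv c)).image _)
  obtain ⟨n, hn⟩ : ∃ n : ℤ, n • (1 : ℝ) = r * θ - x := by
    rw [← AddCircle.coe_eq_zero_iff, AddCircle.coe_sub, ← nsmul_eq_mul, AddCircle.coe_nsmul, hrx,
      sub_self]
  have hfract : Int.fract (c + r * θ) = c + x := by
    rw [(Int.fract_eq_fract (b := c + x)).2 ⟨n, by rw [← zsmul_one, hn]; ring⟩,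
      Int.fract_eq_self.2 ⟨by linarith, by linarith⟩]
  exact ⟨r, hfract ▸ ⟨by linarith, by linarith⟩⟩

section FloorField

variable {α : Type*} [Field α] [LinearOrder α] [IsStrictOrderedRing α] [FloorRing α]

theorem round_intCast_mul {n : ℤ} {x : α} (h : |(n : α)| * |x - round x| < 1 / 2) :
    round (n * x) = n * round x := by
  have hsplit : (n : α) * x = n * (x - round x) + ((n * round x : ℤ) : α) := by push_cast; ring
  have hsmall : |(n : α) * (x - round x)| < 1 / 2 := by rwa [abs_mul]
  rw [hsplit, round_add_intCast,
    round_eq_zero_iff.2 ⟨(abs_lt.1 hsmall).1.le, (abs_lt.1 hsmall).2⟩, zero_add]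

theorem abs_intCast_mul_sub_round {n : ℤ} {x : α} (h : |(n : α)| * |x - round x| < 1 / 2) :
    |n * x - round (n * x)| = |(n : α)| * |x - round x| := by
  rw [round_intCast_mul h, Int.cast_mul, ← mul_sub, abs_mul]

theorem Int.fract_intCast_mul_fract_add (n : ℤ) (x s : α) :
    Int.fract (n * Int.fract x + s) = Int.fract (n * x + s) :=
  Int.fract_eq_fract.2 ⟨-(n * ⌊x⌋), by rw [Int.fract]; push_cast; ring⟩

end FloorField

theorem infinite_setOf_le_abs_pow_mul_sub_round {x : ℝ} (hx : Irrational x) {C : ℤ} (hC : 1 < C) :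
    {m : ℕ | 1 / (2 * C) ≤ |(C : ℝ) ^ m * x - round ((C : ℝ) ^ m * x)|}.Infinite := by
  have hC' : (1 : ℝ) < C := by exact_mod_cast hC
  have hCabs : |(C : ℝ)| = C := abs_of_pos (by linarith)
  set g : ℕ → ℝ := fun m => |(C : ℝ) ^ m * x - round ((C : ℝ) ^ m * x)|
  have hstep : ∀ m, g m < 1 / (2 * C) → g (m + 1) = C * g m := by
    intro m hm
    have hlt : |(C : ℝ)| * g m < 1 / 2 := by
      rw [hCabs]
      calc (C : ℝ) * g m < C * (1 / (2 * C)) := by gcongr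
        _ = 1 / 2 := by field_simp
    have := abs_intCast_mul_sub_round hlt
    rwa [← mul_assoc, ← pow_succ', hCabs] at this
  rw [← Nat.frequently_atTop_iff_infinite]
  intro hsmall
  obtain ⟨m₀, hm₀⟩ := eventually_atTop.1 hsmall
  have hgrowth : ∀ k, g (m₀ + k) = (C : ℝ) ^ k * g m₀ := by
    intro k
    induction k with
    | zero => simp
    | succ k ih => rw [← add_assoc, hstep _ (not_le.1 (hm₀ _ (by omega))), ih, pow_succ']; ring
  have hzero : g m₀ = 0 := by
    by_contra hne
    have hpos : 0 < g m₀ := lt_of_le_of_ne (abs_nonneg _) (Ne.symm hne)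
    obtain ⟨k, hk⟩ := pow_unbounded_of_one_lt (1 / (2 * C) / g m₀) hC'
    have hsmall : g (m₀ + k) < 1 / (2 * C) := not_le.1 (hm₀ (m₀ + k) (by omega))
    rw [hgrowth, ← lt_div_iff₀ hpos] at hsmall
    linarith
  refine (hx.intCast_mul (pow_ne_zero m₀ (by omega : C ≠ 0))).ne_int (round ((C : ℝ) ^ m₀ * x)) ?_
  rw [Int.cast_pow]
  exact sub_eq_zero.1 (abs_eq_zero.1 hzero)

theorem exists_nat_mul_mem_Ioo {t w : ℝ} (ht₀ : 0 < t) (ht₁ : t < 1) (hw : w < 1 / 2) :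
    ∃ K : ℕ, 0 < K ∧ w < K * t ∧ K * t < 1 := by
  set n := ⌊w / t⌋₊
  refine ⟨n + 1, n.succ_pos,
    by exact_mod_cast (div_lt_iff₀ ht₀).1 (Nat.lt_floor_add_one (w / t)), ?_⟩
  rcases Nat.eq_zero_or_pos n with hn | hn
  · simpa [hn] using ht₁
  · have hnw : n * t ≤ w := (le_div_iff₀ ht₀).1 (Nat.floor_le (Nat.pos_of_floor_pos hn).le)
    have htn : t ≤ n * t := le_mul_of_one_le_left ht₀.le (by exact_mod_cast hn)
    push_cast
    linarith

theorem eventually_fract_mem_Ioo {X : Type*} [TopologicalSpace X] {f : X → ℝ} {β : X}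
    (hf : ContinuousAt f β) {u v : ℝ} (hu : 0 ≤ u) (h : Int.fract (f β) ∈ Ioo u v) :
    ∀ᶠ y in 𝓝 β, Int.fract (f y) ∈ Ioo u v := by
  have hβ : f β ≠ ⌊f β⌋ := fun he => by
    have : Int.fract (f β) = 0 := by rw [Int.fract, ← he, sub_self]
    linarith [h.1]
  exact (continuousAt_fract hβ).comp hf |>.eventually (isOpen_Ioo.mem_nhds h)

theorem exists_mapClusterPt_fract_pow_mul {θ : ℝ} (hθ : Irrational θ) {C : ℤ} (hC : 1 < C)
    {n : ℤ} (hn : n ≠ 0) :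
    ∃ β : ℝ, 0 < Int.fract (n * β) ∧
      MapClusterPt β atTop (fun m : ℕ => Int.fract ((C : ℝ) ^ m * θ)) := by
  set ε : ℝ := 1 / (2 * C)
  have hε : 0 < ε := one_div_pos.2 (by positivity)
  set s : Set ℝ := Icc 0 1 ∩ ⋂ z : ℤ, {y | ε ≤ |n * y - z|}
  have hs : IsCompact s :=
    isCompact_Icc.inter_right (isClosed_iInter fun z => isClosed_le continuous_const (by fun_prop))
  have hfreq : ∃ᶠ m in atTop, Int.fract ((C : ℝ) ^ m * θ) ∈ s := by
    refine (Nat.frequently_atTop_iff_infinite.2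
      (infinite_setOf_le_abs_pow_mul_sub_round (hθ.intCast_mul hn) hC)).mono fun m hm => ?_
    refine ⟨⟨Int.fract_nonneg _, (Int.fract_lt_one _).le⟩, mem_iInter.2 fun z => ?_⟩
    calc ε ≤ _ := hm
      _ ≤ |(C : ℝ) ^ m * (n * θ) - ((n * Int.floor ((C : ℝ) ^ m * θ) + z : ℤ) : ℝ)| :=
        round_le _ _
      _ = |n * Int.fract ((C : ℝ) ^ m * θ) - z| := by rw [Int.fract]; push_cast; ring_nf
  obtain ⟨β, ⟨-, hβ⟩, hclus⟩ := hs.exists_mapClusterPt_of_frequently hfreq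
  have hfar : ε ≤ |n * β - ⌊n * β⌋| := mem_iInter.1 hβ ⌊(n : ℝ) * β⌋
  rw [← Int.fract, abs_of_nonneg (Int.fract_nonneg _)] at hfar
  exact ⟨β, hε.trans_le hfar, hclus⟩

theorem exists_nat_fract_mul_add_mem_Ioo_Ioo {θ : ℝ} (hθ : Irrational θ) {β γ : ℝ}
    (hβγ : 0 < Int.fract (γ - β)) {a b : ℝ} (ha : 0 < a) (hab : a < b) (hb : b < 1)
    (hgap : b - a < 1 / 2) :
    ∃ K : ℕ, 0 < K ∧ ∃ r : ℕ,
      Int.fract (K * β + r * θ) ∈ Ioo 0 a ∧ Int.fract (K * γ + r * θ) ∈ Ioo b 1 := by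
  obtain ⟨K, hK, hδb, hδ1⟩ := exists_nat_mul_mem_Ioo hβγ (Int.fract_lt_one _) hgap
  set δ := K * Int.fract (γ - β)
  obtain ⟨r, hr₀, hr₁⟩ := exists_nat_fract_add_mul_mem_Ioo hθ (K * β) (v := min a (1 - δ))
    (le_max_right (b - δ) 0)
    (max_lt (lt_min (by linarith) (by linarith)) (lt_min ha (by linarith)))
    ((min_le_left _ _).trans (hab.trans hb).le)
  set y := Int.fract (K * β + r * θ)
  have hy₀ : 0 < y := (le_max_right _ _).trans_lt hr₀
  have hy₁ : y + δ < 1 := by linarith [min_le_right a (1 - δ)]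
  have hshift : Int.fract (K * γ + r * θ) = y + δ := by
    rw [(Int.fract_eq_fract (b := y + δ)).2 ⟨⌊K * β + r * θ⌋ + K * ⌊γ - β⌋, by
      simp only [y, δ, Int.fract]; push_cast; ring⟩, Int.fract_eq_self.2 ⟨by linarith, hy₁⟩]
  refine ⟨K, hK, r, ⟨hy₀, hr₁.trans_le (min_le_left _ _)⟩, hshift ▸ ⟨?_, hy₁⟩⟩
  linarith [le_max_left (b - δ) 0]

theorem stmt8_general (θ : ℝ) (hθ : Irrational θ) (C : ℤ) (hC : 1 < C)
    (a b : ℝ) (ha : 0 < a) (hab : a < b) (hb : b < 1) (hgap : b - a < 1 / 3) :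
    ∃ K : ℕ, 0 < K ∧ ∃ r : ℕ,
      {m : ℕ | Int.fract (((K : ℝ) * (C : ℝ) ^ m + (r : ℝ)) * θ) < a ∧
        b < Int.fract (((K : ℝ) * (C : ℝ) ^ (m + 1) + (r : ℝ)) * θ)}.Infinite := by
  obtain ⟨β, hβ, hclus⟩ := exists_mapClusterPt_fract_pow_mul hθ hC (n := C - 1) (by omega)
  obtain ⟨K, hK, r, hβK, hCβK⟩ := exists_nat_fract_mul_add_mem_Ioo_Ioo hθ (γ := C * β)
    (by rwa [show (C : ℝ) * β - β = ((C - 1 : ℤ) : ℝ) * β by push_cast; ring])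
    ha hab hb (by linarith)
  have hnear : ∀ᶠ x in 𝓝 β, Int.fract (K * x + r * θ) ∈ Ioo 0 a ∧
      Int.fract (K * (C * x) + r * θ) ∈ Ioo b 1 :=
    (eventually_fract_mem_Ioo (f := fun x => K * x + r * θ) (by fun_prop) le_rfl hβK).and
      (eventually_fract_mem_Ioo (f := fun x => K * (C * x) + r * θ) (by fun_prop)
        (ha.trans hab).le hCβK)
  refine ⟨K, hK, r, Nat.frequently_atTop_iff_infinite.1 ((hclus.frequently hnear).mono
    fun m hm => ?_)⟩
  have h₁ := Int.fract_intCast_mul_fract_add K ((C : ℝ) ^ m * θ) (r * θ)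
  have h₂ := Int.fract_intCast_mul_fract_add (K * C) ((C : ℝ) ^ m * θ) (r * θ)
  push_cast at h₁ h₂
  rw [← mul_assoc, h₁, h₂] at hm
  ring_nf at hm ⊢
  exact ⟨hm.1.2, hm.2.1⟩

/-- Let `θ > 0` be irrational, `C > 1` an integer, `0 < a < b < 1` with
`b - a < 1/3`. Then there exist a positive integer `K`, a nonnegative integer `r`, and
infinitely many naturals `m` such that `{(K·C^m + r)·θ} < a` and `{(K·C^(m+1) + r)·θ} > b`. -/
theorem stmt8 (θ : ℝ) (hθpos : 0 < θ) (hθ : Irrational θ) (C : ℤ) (hC : 1 < C)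
    (a b : ℝ) (ha : 0 < a) (hab : a < b) (hb : b < 1) (hgap : b - a < 1 / 3) :
    ∃ K : ℕ, 0 < K ∧ ∃ r : ℕ,
      {m : ℕ | Int.fract (((K : ℝ) * (C : ℝ) ^ m + (r : ℝ)) * θ) < a ∧
        b < Int.fract (((K : ℝ) * (C : ℝ) ^ (m + 1) + (r : ℝ)) * θ)}.Infinite :=
  stmt8_general θ hθ C hC a b ha hab hb hgap
end
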